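/- arXiv:2504.03309 — 3 statements merged into one kernel-verified Lean document; each statement's English description precedes it below -/
import Mathlib

section
/- Suppose w₁, w₂, w₃ > 0 and w₂w₃ > w₄² + w₅². Then for any unit vector n ∈ ℝ³ and any (ẋ,ṅ) ∈ ℝ³×ℝ³ with ṅ·n = 0, the quantity Q = w₁|ẋ·n|² + w₂‖ẋ×n‖² + w₃‖ṅ‖² + 2w₄(ẋ·ṅ) + 2w₅ ẋ·(ṅ×n) is nonnegative, and Q = 0 implies ẋ = 0 and ṅ = 0. -/
/-!
Write `a = ẋ·n` for the normal component of `ẋ` and `m = w₄ ṅ + w₅ ṅ×n`. Since `ṅ ⊥ n` and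
`‖n‖ = 1`, the vectors `ṅ` and `ṅ×n` are orthogonal of the same length, so
`‖m‖² = (w₄² + w₅²)‖ṅ‖²`. Completing the square in the tangential part `ẋ - a n` gives
`w₂ Q = w₁w₂ a² + ‖w₂ (ẋ - a n) + m‖² + (w₂w₃ - w₄² - w₅²)‖ṅ‖²`,
a sum of nonnegative terms that vanishes only if `ṅ = 0`, `a = 0` and then `ẋ = 0`.
-/

open Matrix

section CommRing

variable {R : Type*} [CommRing R]

theorem cross_dot_cross_self_of_orthogonal {v n : Fin 3 → R} (hn : n ⬝ᵥ n = 1)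
    (hv : v ⬝ᵥ n = 0) : v ⨯₃ n ⬝ᵥ v ⨯₃ n = v ⬝ᵥ v := by
  rw [cross_dot_cross, hn, hv, mul_one, zero_mul, sub_zero]

def Qform (w₁ w₂ w₃ w₄ w₅ : R) (n xdot ndot : Fin 3 → R) : R :=
  w₁ * (xdot ⬝ᵥ n) ^ 2
    + w₂ * ((xdot ⨯₃ n) ⬝ᵥ (xdot ⨯₃ n))
    + w₃ * (ndot ⬝ᵥ ndot)
    + 2 * w₄ * (xdot ⬝ᵥ ndot)
    + 2 * w₅ * (xdot ⬝ᵥ (ndot ⨯₃ n))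

variable {w₁ w₂ w₃ w₄ w₅ : R} {n xdot ndot : Fin 3 → R}

theorem mul_Qform_eq (hn : n ⬝ᵥ n = 1) (htan : ndot ⬝ᵥ n = 0) :
    let v := w₂ • (xdot - (xdot ⬝ᵥ n) • n) + w₄ • ndot + w₅ • ndot ⨯₃ n
    w₂ * Qform w₁ w₂ w₃ w₄ w₅ n xdot ndot =
      w₁ * w₂ * (xdot ⬝ᵥ n) ^ 2 + v ⬝ᵥ v + (w₂ * w₃ - w₄ ^ 2 - w₅ ^ 2) * (ndot ⬝ᵥ ndot) := by
  intro v
  have hm := cross_dot_cross_self_of_orthogonal hn htan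
  have hx := cross_dot_cross xdot n xdot n
  simp only [v, Qform, add_dotProduct, dotProduct_add, sub_dotProduct, dotProduct_sub,
    smul_dotProduct, dotProduct_smul, smul_eq_mul, dot_self_cross, dot_cross_self,
    dotProduct_comm n ndot, dotProduct_comm n xdot, dotProduct_comm ndot xdot,
    dotProduct_comm (ndot ⨯₃ n), htan, hn] at hx ⊢
  linear_combination w₂ ^ 2 * hx - w₅ ^ 2 * hm

end CommRing

section LinearOrderedCommRing

variable {R : Type*} [CommRing R] [LinearOrder R] [IsStrictOrderedRing R]

theorem dotProduct_self_nonneg {ι : Type*} [Fintype ι] (v : ι → R) : 0 ≤ v ⬝ᵥ v :=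
  Finset.sum_nonneg fun i _ => mul_self_nonneg (v i)

variable {w₁ w₂ w₃ w₄ w₅ : R} {n xdot ndot : Fin 3 → R}

theorem Qform_nonneg (hw₁ : 0 ≤ w₁) (hw₂ : 0 < w₂) (hw : w₄ ^ 2 + w₅ ^ 2 ≤ w₂ * w₃)
    (hn : n ⬝ᵥ n = 1) (htan : ndot ⬝ᵥ n = 0) : 0 ≤ Qform w₁ w₂ w₃ w₄ w₅ n xdot ndot := by
  refine nonneg_of_mul_nonneg_right ?_ hw₂
  rw [mul_Qform_eq hn htan]
  have hD : 0 ≤ w₂ * w₃ - w₄ ^ 2 - w₅ ^ 2 := by linarith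
  exact add_nonneg (add_nonneg (by positivity) (dotProduct_self_nonneg _))
    (mul_nonneg hD (dotProduct_self_nonneg ndot))

theorem eq_zero_of_Qform_eq_zero (hw₁ : 0 < w₁) (hw₂ : 0 < w₂) (hw : w₄ ^ 2 + w₅ ^ 2 < w₂ * w₃)
    (hn : n ⬝ᵥ n = 1) (htan : ndot ⬝ᵥ n = 0) (hQ : Qform w₁ w₂ w₃ w₄ w₅ n xdot ndot = 0) :
    xdot = 0 ∧ ndot = 0 := by
  set v := w₂ • (xdot - (xdot ⬝ᵥ n) • n) + w₄ • ndot + w₅ • ndot ⨯₃ n with hv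
  have hD : 0 < w₂ * w₃ - w₄ ^ 2 - w₅ ^ 2 := by linarith
  have key : w₁ * w₂ * (xdot ⬝ᵥ n) ^ 2 + v ⬝ᵥ v
      + (w₂ * w₃ - w₄ ^ 2 - w₅ ^ 2) * (ndot ⬝ᵥ ndot) = 0 := by
    rw [← mul_Qform_eq hn htan, hQ, mul_zero]
  have ha_nonneg : 0 ≤ w₁ * w₂ * (xdot ⬝ᵥ n) ^ 2 := by positivity
  rw [add_eq_zero_iff_of_nonneg (add_nonneg ha_nonneg (dotProduct_self_nonneg v))
      (mul_nonneg hD.le (dotProduct_self_nonneg ndot)),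
    add_eq_zero_iff_of_nonneg ha_nonneg (dotProduct_self_nonneg v)] at key
  obtain ⟨⟨hnormal, hv0⟩, hnd⟩ := key
  have hndot : ndot = 0 := dotProduct_self_eq_zero.mp ((mul_eq_zero.mp hnd).resolve_left hD.ne')
  have ha : xdot ⬝ᵥ n = 0 := pow_eq_zero_iff two_ne_zero |>.mp <|
    (mul_eq_zero.mp hnormal).resolve_left (mul_pos hw₁ hw₂).ne'
  rw [dotProduct_self_eq_zero, hv, hndot, ha] at hv0
  simp only [zero_smul, sub_zero, smul_zero, map_zero, LinearMap.zero_apply, add_zero,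
    smul_eq_zero, hw₂.ne', false_or] at hv0
  exact ⟨hv0, hndot⟩

end LinearOrderedCommRing

theorem Qform_posdef_general
    (w₁ w₂ w₃ w₄ w₅ : ℝ)
    (hw₁ : 0 < w₁) (hw₂ : 0 < w₂)
    (hw : w₄ ^ 2 + w₅ ^ 2 < w₂ * w₃)
    (n xdot ndot : Fin 3 → ℝ)
    (hn : n ⬝ᵥ n = 1) (htan : ndot ⬝ᵥ n = 0) :
    0 ≤ w₁ * (xdot ⬝ᵥ n) ^ 2
        + w₂ * ((xdot ⨯₃ n) ⬝ᵥ (xdot ⨯₃ n))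
        + w₃ * (ndot ⬝ᵥ ndot)
        + 2 * w₄ * (xdot ⬝ᵥ ndot)
        + 2 * w₅ * (xdot ⬝ᵥ (ndot ⨯₃ n)) ∧
    (w₁ * (xdot ⬝ᵥ n) ^ 2
        + w₂ * ((xdot ⨯₃ n) ⬝ᵥ (xdot ⨯₃ n))
        + w₃ * (ndot ⬝ᵥ ndot)
        + 2 * w₄ * (xdot ⬝ᵥ ndot)
        + 2 * w₅ * (xdot ⬝ᵥ (ndot ⨯₃ n)) = 0
      → xdot = 0 ∧ ndot = 0) :=
  ⟨Qform_nonneg hw₁.le hw₂ hw.le hn htan, eq_zero_of_Qform_eq_zero hw₁ hw₂ hw hn htan⟩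

/-- Under the positivity constraints `w₁, w₂, w₃ > 0` and
`w₂w₃ > w₄² + w₅²`, the quadratic form
`Q = w₁|ẋ·n|² + w₂‖ẋ×n‖² + w₃‖ṅ‖² + 2w₄(ẋ·ṅ) + 2w₅ ẋ·(ṅ×n)`
is nonnegative, and vanishes only when `ẋ = 0` and `ṅ = 0`. -/
theorem Qform_posdef
    (w₁ w₂ w₃ w₄ w₅ : ℝ)
    (hw₁ : 0 < w₁) (hw₂ : 0 < w₂) (hw₃ : 0 < w₃)
    (hw : w₄ ^ 2 + w₅ ^ 2 < w₂ * w₃)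
    (n xdot ndot : Fin 3 → ℝ)
    (hn : n ⬝ᵥ n = 1) (htan : ndot ⬝ᵥ n = 0) :
    0 ≤ w₁ * (xdot ⬝ᵥ n) ^ 2
        + w₂ * ((xdot ⨯₃ n) ⬝ᵥ (xdot ⨯₃ n))
        + w₃ * (ndot ⬝ᵥ ndot)
        + 2 * w₄ * (xdot ⬝ᵥ ndot)
        + 2 * w₅ * (xdot ⬝ᵥ (ndot ⨯₃ n)) ∧
    (w₁ * (xdot ⬝ᵥ n) ^ 2
        + w₂ * ((xdot ⨯₃ n) ⬝ᵥ (xdot ⨯₃ n))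
        + w₃ * (ndot ⬝ᵥ ndot)
        + 2 * w₄ * (xdot ⬝ᵥ ndot)
        + 2 * w₅ * (xdot ⬝ᵥ (ndot ⨯₃ n)) = 0
      → xdot = 0 ∧ ndot = 0) :=
  Qform_posdef_general w₁ w₂ w₃ w₄ w₅ hw₁ hw₂ hw n xdot ndot hn htan
end

section
/- Let p₁ = (x₁,n₁), p₂ = (x₂,n₂) ∈ M3 with n₁ ≠ ±n₂. Define θ = arccos(n₁·n₂), L = (n₂n₁ᵀ - n₁n₂ᵀ)/sin θ, x⃗ = x₂ - x₁, x_m = (x₁+x₂)/2, and decompose x⃗ = x⃗_∥ + x⃗_⊥ with x⃗_∥ the orthogonal projection onto N = span{n₁,n₂}. Let R = I + sin(θ)L + (1-cos θ)L² and c = x_m + (1/2)cot(θ/2) L x⃗_∥. Then the map S(x) = c + R(x - c) + x⃗_⊥ satisfies S(x₁) = x₂ (and R n₁ = n₂), i.e., the planar screw displacement maps p₁ to p₂. -/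
/-! On `N = span {n₁, n₂}` the matrix `L` is a quarter turn: `n₂ n₁ᵀ - n₁ n₂ᵀ` squares to
`-(1 - cos² θ) = -sin² θ` there, so `L² = -1` on `N`, while `L` kills `N^⊥`. Hence `R` rotates `N`
by `θ` (so `R n₁ = cos θ n₁ + (n₂ - cos θ n₁) = n₂`) and fixes `N^⊥`. The half-angle identities
`cot (θ/2) sin θ = 1 + cos θ` and `cot (θ/2) (1 - cos θ) = sin θ` then show that the rotation about
`c` moves `x₁` by exactly `x⃗_∥`, and the translation by `x⃗_⊥` does the rest. -/

open Matrix Real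

section SkewProduct

variable {ι 𝕜 : Type*} [Fintype ι] [CommRing 𝕜] {n₁ n₂ : ι → 𝕜}

lemma vecMulVec_sub_vecMulVec_mulVec (v : ι → 𝕜) :
    (vecMulVec n₂ n₁ - vecMulVec n₁ n₂) *ᵥ v = (n₁ ⬝ᵥ v) • n₂ - (n₂ ⬝ᵥ v) • n₁ := by
  simp only [sub_mulVec, vecMulVec_mulVec, op_smul_eq_smul]

lemma vecMulVec_sub_vecMulVec_mulVec_mulVec_of_mem_span
    (hn₁ : n₁ ⬝ᵥ n₁ = 1) (hn₂ : n₂ ⬝ᵥ n₂ = 1) {v : ι → 𝕜} (hv : v ∈ Submodule.span 𝕜 {n₁, n₂}) :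
    (vecMulVec n₂ n₁ - vecMulVec n₁ n₂) *ᵥ ((vecMulVec n₂ n₁ - vecMulVec n₁ n₂) *ᵥ v) =
      -(1 - (n₁ ⬝ᵥ n₂) ^ 2) • v := by
  set A := vecMulVec n₂ n₁ - vecMulVec n₁ n₂
  have hpair : Set.EqOn (mulVecLin (A * A))
      ((-(1 - (n₁ ⬝ᵥ n₂) ^ 2)) • LinearMap.id : (ι → 𝕜) →ₗ[𝕜] ι → 𝕜) {n₁, n₂} := by
    simp only [Set.EqOn, Set.forall_mem_insert, Set.mem_singleton_iff, forall_eq]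
    constructor <;>
    · simp only [mulVecLin_apply, ← mulVec_mulVec, A, vecMulVec_sub_vecMulVec_mulVec,
        dotProduct_sub, dotProduct_smul, hn₁, hn₂, dotProduct_comm n₂ n₁, smul_eq_mul,
        LinearMap.smul_apply, LinearMap.id_apply]
      module
  simpa [mulVec_mulVec] using LinearMap.eqOn_span hpair hv

end SkewProduct

lemma abs_dotProduct_lt_one {ι : Type*} [Fintype ι] {n₁ n₂ : ι → ℝ}
    (hn₁ : n₁ ⬝ᵥ n₁ = 1) (hn₂ : n₂ ⬝ᵥ n₂ = 1) (hne : n₁ ≠ n₂) (hne' : n₁ ≠ -n₂) :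
    |n₁ ⬝ᵥ n₂| < 1 := by
  have hpos : ∀ v : ι → ℝ, v ≠ 0 → 0 < v ⬝ᵥ v := fun v hv =>
    (Finset.sum_nonneg fun i _ => mul_self_nonneg (v i)).lt_of_ne'
      (dotProduct_self_eq_zero.not.mpr hv)
  have hsub := hpos _ (sub_ne_zero.mpr hne)
  have hadd := hpos _ (fun h => hne' (eq_neg_of_add_eq_zero_left h))
  simp only [sub_dotProduct, dotProduct_sub, add_dotProduct, dotProduct_add, hn₁, hn₂,
    dotProduct_comm n₂ n₁] at hsub hadd
  exact abs_lt.mpr ⟨by linarith, by linarith⟩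

lemma cot_half_mul_sin {θ : ℝ} (h : sin (θ / 2) ≠ 0) :
    cos (θ / 2) / sin (θ / 2) * sin θ = 1 + cos θ := by
  obtain ⟨φ, rfl⟩ : ∃ φ, θ = 2 * φ := ⟨θ / 2, by ring⟩
  rw [mul_div_cancel_left₀ φ two_ne_zero] at h ⊢
  rw [sin_two_mul, cos_two_mul]
  field_simp
  ring

lemma cot_half_mul_one_sub_cos {θ : ℝ} (h : sin (θ / 2) ≠ 0) :
    cos (θ / 2) / sin (θ / 2) * (1 - cos θ) = sin θ := by
  obtain ⟨φ, rfl⟩ : ∃ φ, θ = 2 * φ := ⟨θ / 2, by ring⟩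
  rw [mul_div_cancel_left₀ φ two_ne_zero] at h ⊢
  rw [sin_two_mul, cos_two_mul, div_mul_eq_mul_div, div_eq_iff h]
  linear_combination (-2 * cos φ) * sin_sq_add_cos_sq φ

section Rodrigues

variable {ι : Type*} [Fintype ι] [DecidableEq ι] (L : Matrix ι ι ℝ) (θ : ℝ)

lemma rodrigues_mulVec_of_mulVec_mulVec_eq_neg {v : ι → ℝ} (hv : L *ᵥ (L *ᵥ v) = -v) :
    (1 + sin θ • L + (1 - cos θ) • (L * L)) *ᵥ v = cos θ • v + sin θ • L *ᵥ v := by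
  rw [add_mulVec, add_mulVec, one_mulVec, smul_mulVec, smul_mulVec, ← mulVec_mulVec, hv]
  module

lemma rodrigues_mulVec_of_mulVec_eq_zero {w : ι → ℝ} (hw : L *ᵥ w = 0) :
    (1 + sin θ • L + (1 - cos θ) • (L * L)) *ᵥ w = w := by
  rw [add_mulVec, add_mulVec, one_mulVec, smul_mulVec, smul_mulVec, ← mulVec_mulVec, hw,
    mulVec_zero, smul_zero, smul_zero, add_zero, add_zero]

lemma screw_mulVec_eq (x₁ x₂ p : ι → ℝ) (hp : L *ᵥ (L *ᵥ p) = -p)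
    (hw : L *ᵥ (x₂ - x₁ - p) = 0) (hθ : sin (θ / 2) ≠ 0) :
    let R := 1 + sin θ • L + (1 - cos θ) • (L * L)
    let c := (2 : ℝ)⁻¹ • (x₁ + x₂) + ((2 : ℝ)⁻¹ * (cos (θ / 2) / sin (θ / 2))) • L *ᵥ p
    c + R *ᵥ (x₁ - c) + (x₂ - x₁ - p) = x₂ := by
  intro R c
  set w := x₂ - x₁ - p
  have hx₂ : x₂ = x₁ + p + w := by simp only [w]; abel
  have hLp : L *ᵥ (L *ᵥ (L *ᵥ p)) = -(L *ᵥ p) := by rw [hp, mulVec_neg]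
  have hc : x₁ - c = (-(2 : ℝ)⁻¹) • p + (-(2 : ℝ)⁻¹) • w
      + (-((2 : ℝ)⁻¹ * (cos (θ / 2) / sin (θ / 2)))) • L *ᵥ p := by
    simp only [c, hx₂]; module
  rw [hc, mulVec_add, mulVec_add, mulVec_smul, mulVec_smul, mulVec_smul,
    rodrigues_mulVec_of_mulVec_mulVec_eq_neg L θ hp, rodrigues_mulVec_of_mulVec_eq_zero L θ hw,
    rodrigues_mulVec_of_mulVec_mulVec_eq_neg L θ hLp, hp]
  simp only [c, hx₂]
  have h₁ := cot_half_mul_sin hθ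
  have h₂ := cot_half_mul_one_sub_cos hθ
  match_scalars
  · ring
  · linear_combination (2 : ℝ)⁻¹ * h₁
  · ring
  · linear_combination (2 : ℝ)⁻¹ * h₂

end Rodrigues

/-- The planar screw displacement `S(x) = c + R(x - c) + x⃗_⊥`, with
`c = x_m + (1/2)cot(θ/2) L x⃗_∥`, maps `p₁ = (x₁,n₁)` to `p₂ = (x₂,n₂)`:
`S(x₁) = x₂` and `R n₁ = n₂`. -/
theorem planar_screw_displacement_maps
    (x₁ n₁ x₂ n₂ : Fin 3 → ℝ)
    (hn₁ : n₁ ⬝ᵥ n₁ = 1) (hn₂ : n₂ ⬝ᵥ n₂ = 1)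
    (hne : n₁ ≠ n₂) (hne' : n₁ ≠ -n₂)
    (xpar : Fin 3 → ℝ)
    (hpar : xpar ∈ Submodule.span ℝ {n₁, n₂})
    (hperp₁ : ((x₂ - x₁) - xpar) ⬝ᵥ n₁ = 0)
    (hperp₂ : ((x₂ - x₁) - xpar) ⬝ᵥ n₂ = 0) :
    let θ := Real.arccos (n₁ ⬝ᵥ n₂)
    let L := (Real.sin θ)⁻¹ • (vecMulVec n₂ n₁ - vecMulVec n₁ n₂)
    let R := (1 : Matrix (Fin 3) (Fin 3) ℝ) + Real.sin θ • L
      + (1 - Real.cos θ) • (L * L)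
    let xm := (2 : ℝ)⁻¹ • (x₁ + x₂)
    let c := xm + ((2 : ℝ)⁻¹ * (Real.cos (θ / 2) / Real.sin (θ / 2))) •
      L.mulVec xpar
    c + R.mulVec (x₁ - c) + ((x₂ - x₁) - xpar) = x₂ ∧ R.mulVec n₁ = n₂ := by
  intro θ L R xm c
  obtain ⟨ha₁, ha₂⟩ := abs_lt.mp (abs_dotProduct_lt_one hn₁ hn₂ hne hne')
  have hcos : cos θ = n₁ ⬝ᵥ n₂ := cos_arccos ha₁.le ha₂.le
  have hsin_sq : sin θ ^ 2 = 1 - (n₁ ⬝ᵥ n₂) ^ 2 := by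
    rw [sin_arccos, sq_sqrt (by nlinarith)]
  have hsin : sin θ ≠ 0 := by
    rw [← sq_pos_iff, hsin_sq]; nlinarith
  have hhalf : sin (θ / 2) ≠ 0 := by
    have h : sin θ = 2 * sin (θ / 2) * cos (θ / 2) := by rw [← sin_two_mul]; ring_nf
    exact right_ne_zero_of_mul (left_ne_zero_of_mul (h ▸ hsin))
  have hLL : ∀ v ∈ Submodule.span ℝ {n₁, n₂}, L *ᵥ (L *ᵥ v) = -v := fun v hv => by
    simp only [L, smul_mulVec, mulVec_smul, smul_smul, ← hsin_sq,
      vecMulVec_sub_vecMulVec_mulVec_mulVec_of_mem_span hn₁ hn₂ hv]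
    rw [show (sin θ)⁻¹ * ((sin θ)⁻¹ * -sin θ ^ 2) = -1 by field_simp, neg_one_smul]
  have hLw : L *ᵥ (x₂ - x₁ - xpar) = 0 := by
    simp only [L, smul_mulVec, vecMulVec_sub_vecMulVec_mulVec, dotProduct_comm n₁,
      dotProduct_comm n₂, hperp₁, hperp₂, zero_smul, sub_zero, smul_zero]
  refine ⟨screw_mulVec_eq L θ x₁ x₂ xpar (hLL xpar hpar) hLw hhalf, ?_⟩
  rw [rodrigues_mulVec_of_mulVec_mulVec_eq_neg L θ (hLL n₁ (Submodule.subset_span (by simp))),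
    smul_mulVec, vecMulVec_sub_vecMulVec_mulVec, hn₁, dotProduct_comm n₂ n₁, hcos, one_smul,
    smul_smul, mul_inv_cancel₀ hsin, one_smul]
  module
end

section
/- With notation as in the planar screw displacement construction (n₁ ≠ ±n₂, θ = arccos(n₁·n₂), L, R = I + sin(θ)L + (1-cos θ)L², x⃗ = x₂-x₁, x⃗_∥ projection of x⃗ onto span{n₁,n₂}, x_m = (x₁+x₂)/2, c = x_m + (1/2)cot(θ/2)L x⃗_∥), the identity (I - R)(c - x₁) = x⃗_∥ holds, i.e., the rotation about center c accounts exactly for the in-plane displacement. -/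
/-!
`K = n₂ n₁ᵀ - n₁ n₂ᵀ` kills the normal directions of the plane `N = span {n₁, n₂}` and
squares to `-(1 - (n₁ ⬝ n₂)²) = -sin² θ` on `N`, so `L = K / sin θ` satisfies
`L x⃗ = L x⃗_∥` and `L² x⃗_∥ = -x⃗_∥`. Since `c - x₁ = x⃗ / 2 + k L x⃗_∥` with `k = cot (θ/2) / 2`,
expanding gives `(I - R)(c - x₁) = (k sin θ + (1 - cos θ)/2) x⃗_∥ + (k (1 - cos θ) - sin θ / 2) L x⃗_∥`,
and the half-angle formulas make these coefficients `1` and `0`.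
-/

open Matrix

def infinitesimalRotation {ι R : Type*} [CommRing R] (u v : ι → R) : Matrix ι ι R :=
  vecMulVec v u - vecMulVec u v

section InfinitesimalRotation

variable {ι R : Type*} [Fintype ι] [CommRing R] {u v w : ι → R}

theorem infinitesimalRotation_mulVec (u v w : ι → R) :
    infinitesimalRotation u v *ᵥ w = (u ⬝ᵥ w) • v - (v ⬝ᵥ w) • u := by
  simp [infinitesimalRotation, sub_mulVec, vecMulVec_mulVec]

theorem infinitesimalRotation_mulVec_eq_zero (hu : u ⬝ᵥ w = 0) (hv : v ⬝ᵥ w = 0) :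
    infinitesimalRotation u v *ᵥ w = 0 := by
  simp [infinitesimalRotation_mulVec, hu, hv]

theorem infinitesimalRotation_mulVec_mulVec_of_mem_span (hu : u ⬝ᵥ u = 1) (hv : v ⬝ᵥ v = 1)
    (hw : w ∈ Submodule.span R {u, v}) :
    infinitesimalRotation u v *ᵥ (infinitesimalRotation u v *ᵥ w)
      = -(1 - (u ⬝ᵥ v) ^ 2) • w := by
  obtain ⟨a, b, rfl⟩ := Submodule.mem_span_pair.mp hw
  simp only [infinitesimalRotation_mulVec, dotProduct_add, dotProduct_sub, dotProduct_smul,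
    hu, hv, dotProduct_comm v u, smul_eq_mul]
  module

end InfinitesimalRotation

theorem dotProduct_lt_one_of_ne {ι : Type*} [Fintype ι] {u v : ι → ℝ}
    (hu : u ⬝ᵥ u = 1) (hv : v ⬝ᵥ v = 1) (huv : u ≠ v) : u ⬝ᵥ v < 1 := by
  have hpos : 0 < (u - v) ⬝ᵥ (u - v) :=
    lt_of_le_of_ne (by simpa using dotProduct_star_self_nonneg (u - v))
      (Ne.symm (dotProduct_self_eq_zero.not.mpr (sub_ne_zero.mpr huv)))
  have hexp : (u - v) ⬝ᵥ (u - v) = 2 - 2 * (u ⬝ᵥ v) := by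
    simp only [sub_dotProduct, dotProduct_sub, hu, hv, dotProduct_comm v u]
    ring
  linarith

/-- Also true when `sin (θ / 2) = 0`: then both sides vanish. -/
theorem one_sub_cos_mul_half_cot (θ : ℝ) :
    (1 - Real.cos θ) * (2⁻¹ * (Real.cos (θ / 2) / Real.sin (θ / 2))) = Real.sin θ / 2 := by
  obtain ⟨t, rfl⟩ : ∃ t, θ = 2 * t := ⟨θ / 2, by ring⟩
  rw [mul_div_cancel_left₀ t two_ne_zero, Real.cos_two_mul, Real.sin_two_mul]
  by_cases ht : Real.sin t = 0
  · simp [ht]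
  · field_simp
    linear_combination (-2 * Real.cos t) * Real.sin_sq_add_cos_sq t

theorem sin_mul_half_cot {θ : ℝ} (hθ : Real.sin (θ / 2) ≠ 0) :
    Real.sin θ * (2⁻¹ * (Real.cos (θ / 2) / Real.sin (θ / 2))) = (1 + Real.cos θ) / 2 := by
  obtain ⟨t, rfl⟩ : ∃ t, θ = 2 * t := ⟨θ / 2, by ring⟩
  rw [mul_div_cancel_left₀ t two_ne_zero] at hθ ⊢
  rw [Real.cos_two_mul, Real.sin_two_mul]
  field_simp
  ring

theorem one_sub_rotation_mulVec_center_sub {ι : Type*} [Fintype ι] [DecidableEq ι]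
    {L : Matrix ι ι ℝ} {x₁ x₂ p : ι → ℝ} {s d k : ℝ}
    (hLx : L *ᵥ (x₂ - x₁) = L *ᵥ p) (hLL : L *ᵥ (L *ᵥ p) = -p)
    (hk₁ : (1 - d) * k = s / 2) (hk₂ : s * k = (1 + d) / 2) :
    (1 - (1 + s • L + (1 - d) • (L * L))) *ᵥ ((2⁻¹ : ℝ) • (x₁ + x₂) + k • L *ᵥ p - x₁) = p := by
  have hc : (2⁻¹ : ℝ) • (x₁ + x₂) + k • L *ᵥ p - x₁ = (2⁻¹ : ℝ) • (x₂ - x₁) + k • L *ᵥ p := by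
    module
  have hL : L *ᵥ ((2⁻¹ : ℝ) • (x₂ - x₁) + k • L *ᵥ p) = (2⁻¹ : ℝ) • L *ᵥ p - k • p := by
    rw [mulVec_add, mulVec_smul, mulVec_smul, hLx, hLL]
    module
  have hLL' : L *ᵥ ((2⁻¹ : ℝ) • L *ᵥ p - k • p) = -(2⁻¹ : ℝ) • p - k • L *ᵥ p := by
    rw [mulVec_sub, mulVec_smul, mulVec_smul, hLL]
    module
  rw [hc, show (1 - (1 + s • L + (1 - d) • (L * L)) : Matrix ι ι ℝ)
      = -(s • L) - (1 - d) • (L * L) by abel, sub_mulVec, neg_mulVec, smul_mulVec,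
    smul_mulVec, ← mulVec_mulVec, hL, hLL']
  linear_combination (norm := module) hk₂ • p + hk₁ • L *ᵥ p

/-- The rotation about the center `c = x_m + (1/2)cot(θ/2) L x⃗_∥` accounts
exactly for the in-plane displacement: `(I - R)(c - x₁) = x⃗_∥`. -/
theorem rotation_center_in_plane_displacement
    (x₁ n₁ x₂ n₂ : Fin 3 → ℝ)
    (hn₁ : n₁ ⬝ᵥ n₁ = 1) (hn₂ : n₂ ⬝ᵥ n₂ = 1)
    (hne : n₁ ≠ n₂) (hne' : n₁ ≠ -n₂)
    (xpar : Fin 3 → ℝ)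
    (hpar : xpar ∈ Submodule.span ℝ {n₁, n₂})
    (hperp₁ : ((x₂ - x₁) - xpar) ⬝ᵥ n₁ = 0)
    (hperp₂ : ((x₂ - x₁) - xpar) ⬝ᵥ n₂ = 0) :
    let θ := Real.arccos (n₁ ⬝ᵥ n₂)
    let L := (Real.sin θ)⁻¹ • (vecMulVec n₂ n₁ - vecMulVec n₁ n₂)
    let R := (1 : Matrix (Fin 3) (Fin 3) ℝ) + Real.sin θ • L
      + (1 - Real.cos θ) • (L * L)
    let xm := (2 : ℝ)⁻¹ • (x₁ + x₂)
    let c := xm + ((2 : ℝ)⁻¹ * (Real.cos (θ / 2) / Real.sin (θ / 2))) •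
      L.mulVec xpar
    ((1 : Matrix (Fin 3) (Fin 3) ℝ) - R).mulVec (c - x₁) = xpar := by
  intro θ L R xm c
  have hL : L = (Real.sin θ)⁻¹ • infinitesimalRotation n₁ n₂ := rfl
  have hlt : n₁ ⬝ᵥ n₂ < 1 := dotProduct_lt_one_of_ne hn₁ hn₂ hne
  have hgt : -1 < n₁ ⬝ᵥ n₂ := by
    have := dotProduct_lt_one_of_ne hn₁ (by rwa [neg_dotProduct_neg]) hne'
    rw [dotProduct_neg] at this
    linarith
  have hcos : Real.cos θ = n₁ ⬝ᵥ n₂ := Real.cos_arccos hgt.le hlt.le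
  have hsin : Real.sin θ ≠ 0 := by
    rw [Real.sin_arccos]
    exact (Real.sqrt_pos.mpr (by nlinarith)).ne'
  have hsin_half : Real.sin (θ / 2) ≠ 0 := by
    intro h
    apply hsin
    rw [show θ = 2 * (θ / 2) by ring, Real.sin_two_mul, h]
    ring
  have hLL : L *ᵥ (L *ᵥ xpar) = -xpar := by
    rw [hL, smul_mulVec, smul_mulVec, mulVec_smul,
      infinitesimalRotation_mulVec_mulVec_of_mem_span hn₁ hn₂ hpar, ← hcos, ← Real.sin_sq]
    match_scalars
    field_simp
  have hLx : L *ᵥ (x₂ - x₁) = L *ᵥ xpar := by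
    have hperp : infinitesimalRotation n₁ n₂ *ᵥ ((x₂ - x₁) - xpar) = 0 :=
      infinitesimalRotation_mulVec_eq_zero (by rwa [dotProduct_comm])
        (by rwa [dotProduct_comm])
    rw [← sub_add_cancel (x₂ - x₁) xpar, mulVec_add, hL, smul_mulVec, hperp, smul_zero,
      zero_add]
  exact one_sub_rotation_mulVec_center_sub hLx hLL (one_sub_cos_mul_half_cot θ)
    (sin_mul_half_cot hsin_half)
end
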